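/- Let S = UΣVᵀ be a thin SVD of S ∈ ℝ^{ℓ×D} with singular values σ₁ ≥ … ≥ σ_ℓ, δ = σ_ℓ², and let S' = Σ'Vᵀ where σ'_j = sqrt(max(σ_j²−δ,0)). Then 0 ⪯ SᵀS − S'ᵀS' ⪯ δ·I_D. -/

import Mathlib

/-!
Both Gram matrices are diagonalised by `V`: `SᵀS = V diag(σ²) Vᵀ` and
`S'ᵀS' = V diag(max (σ² - δ) 0) Vᵀ`, so `SᵀS - S'ᵀS' = V diag(min σ² δ) Vᵀ` with diagonal entries in
`[0, δ]`. The lower bound is then immediate, and the upper bound follows from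
`δ • 1 - V diag(d) Vᵀ = δ • (1 - V Vᵀ) + V diag(δ - d) Vᵀ`, where `1 - V Vᵀ` is the orthogonal
projection onto the complement of the column space of `V`.
-/

open scoped Matrix

namespace Matrix

variable {m n k : Type*} [Fintype n] [DecidableEq n]

theorem transpose_mul_self_mul_diagonal_mul_transpose [Fintype k] {U : Matrix k n ℝ}
    (hU : Uᵀ * U = 1) (σ : n → ℝ) (V : Matrix m n ℝ) :
    (U * diagonal σ * Vᵀ)ᵀ * (U * diagonal σ * Vᵀ) = V * diagonal (fun j => σ j ^ 2) * Vᵀ := by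
  simp only [transpose_mul, diagonal_transpose, transpose_transpose, Matrix.mul_assoc]
  rw [← Matrix.mul_assoc Uᵀ U, hU, Matrix.one_mul, ← Matrix.mul_assoc (diagonal σ),
    diagonal_mul_diagonal]
  simp only [sq]

theorem transpose_mul_self_diagonal_mul_transpose (σ : n → ℝ) (V : Matrix m n ℝ) :
    (diagonal σ * Vᵀ)ᵀ * (diagonal σ * Vᵀ) = V * diagonal (fun j => σ j ^ 2) * Vᵀ := by
  have h := transpose_mul_self_mul_diagonal_mul_transpose (U := (1 : Matrix n n ℝ))
    (by rw [transpose_one, Matrix.one_mul]) σ V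
  rwa [Matrix.one_mul] at h

theorem posSemidef_mul_diagonal_mul_transpose [Fintype m] (V : Matrix m n ℝ) {d : n → ℝ}
    (hd : 0 ≤ d) :
    (V * diagonal d * Vᵀ).PosSemidef := by
  simpa using (posSemidef_diagonal_iff.mpr hd).mul_mul_conjTranspose_same V

theorem posSemidef_one_sub_mul_transpose [Fintype m] [DecidableEq m] {V : Matrix m n ℝ}
    (hV : Vᵀ * V = 1) : (1 - V * Vᵀ).PosSemidef := by
  have hidem : (1 - V * Vᵀ)ᵀ * (1 - V * Vᵀ) = 1 - V * Vᵀ := by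
    simp only [transpose_sub, transpose_one, transpose_mul, transpose_transpose, Matrix.sub_mul,
      Matrix.mul_sub, Matrix.one_mul, Matrix.mul_one]
    rw [Matrix.mul_assoc V Vᵀ, ← Matrix.mul_assoc Vᵀ V, hV, Matrix.one_mul, sub_self, sub_zero]
  have h := posSemidef_conjTranspose_mul_self (1 - V * Vᵀ)
  rwa [conjTranspose_eq_transpose_of_trivial, hidem] at h

theorem posSemidef_smul_one_sub_mul_diagonal_mul_transpose [Fintype m] [DecidableEq m]
    {V : Matrix m n ℝ} (hV : Vᵀ * V = 1) {c : ℝ} (hc : 0 ≤ c) {d : n → ℝ} (hd : ∀ j, d j ≤ c) :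
    (c • 1 - V * diagonal d * Vᵀ).PosSemidef := by
  have hsplit : c • 1 - V * diagonal d * Vᵀ =
      c • (1 - V * Vᵀ) + V * diagonal (fun j => c - d j) * Vᵀ := by
    rw [show diagonal (fun j => c - d j) = c • 1 - diagonal d by
      rw [smul_one_eq_diagonal, ← diagonal_sub]]
    simp only [smul_sub, Matrix.mul_sub, Matrix.sub_mul, Matrix.mul_smul, Matrix.smul_mul,
      Matrix.mul_one]
    abel
  rw [hsplit]
  exact ((posSemidef_one_sub_mul_transpose hV).smul hc).add
    (posSemidef_mul_diagonal_mul_transpose V fun j => sub_nonneg.mpr (hd j))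

end Matrix

theorem Real.sub_sqrt_max_sub_zero_sq (x δ : ℝ) : x - √(max (x - δ) 0) ^ 2 = min x δ := by
  rw [Real.sq_sqrt (le_max_right _ _)]
  rcases le_total x δ with h | h
  · rw [max_eq_right (by linarith), min_eq_left h, sub_zero]
  · rw [max_eq_left (by linarith), min_eq_right h]; ring

theorem sage_fd_shrink_step_general {ℓ D : ℕ}
    (S : Matrix (Fin (ℓ + 1)) (Fin D) ℝ)
    (U : Matrix (Fin (ℓ + 1)) (Fin (ℓ + 1)) ℝ)
    (V : Matrix (Fin D) (Fin (ℓ + 1)) ℝ)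
    (σ : Fin (ℓ + 1) → ℝ)
    (hU : Uᵀ * U = 1) (hV : Vᵀ * V = 1)
    (hSVD : S = U * Matrix.diagonal σ * Vᵀ)
    (δ : ℝ) (hδ : δ = σ (Fin.last ℓ) ^ 2)
    (S' : Matrix (Fin (ℓ + 1)) (Fin D) ℝ)
    (hS' : S' = Matrix.diagonal (fun j => Real.sqrt (max (σ j ^ 2 - δ) 0)) * Vᵀ) :
    (Sᵀ * S - S'ᵀ * S').PosSemidef ∧
    (δ • (1 : Matrix (Fin D) (Fin D) ℝ) - (Sᵀ * S - S'ᵀ * S')).PosSemidef := by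
  have hδ0 : 0 ≤ δ := hδ ▸ sq_nonneg _
  have hdiff : Sᵀ * S - S'ᵀ * S' = V * Matrix.diagonal (fun j => min (σ j ^ 2) δ) * Vᵀ := by
    rw [hSVD, hS', Matrix.transpose_mul_self_mul_diagonal_mul_transpose hU,
      Matrix.transpose_mul_self_diagonal_mul_transpose,
      ← Matrix.sub_mul, ← Matrix.mul_sub, Matrix.diagonal_sub]
    simp only [Real.sub_sqrt_max_sub_zero_sq]
  rw [hdiff]
  exact ⟨Matrix.posSemidef_mul_diagonal_mul_transpose V fun j => le_min (sq_nonneg _) hδ0,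
    Matrix.posSemidef_smul_one_sub_mul_diagonal_mul_transpose hV hδ0 fun j => min_le_right _ _⟩

theorem sage_fd_shrink_step {ℓ D : ℕ}
    (S : Matrix (Fin (ℓ + 1)) (Fin D) ℝ)
    (U : Matrix (Fin (ℓ + 1)) (Fin (ℓ + 1)) ℝ)
    (V : Matrix (Fin D) (Fin (ℓ + 1)) ℝ)
    (σ : Fin (ℓ + 1) → ℝ) (hnn : ∀ j, 0 ≤ σ j) (hmono : Antitone σ)
    (hU : Uᵀ * U = 1) (hV : Vᵀ * V = 1)
    (hSVD : S = U * Matrix.diagonal σ * Vᵀ)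
    (δ : ℝ) (hδ : δ = σ (Fin.last ℓ) ^ 2)
    (S' : Matrix (Fin (ℓ + 1)) (Fin D) ℝ)
    (hS' : S' = Matrix.diagonal (fun j => Real.sqrt (max (σ j ^ 2 - δ) 0)) * Vᵀ) :
    (Sᵀ * S - S'ᵀ * S').PosSemidef ∧
    (δ • (1 : Matrix (Fin D) (Fin D) ℝ) - (Sᵀ * S - S'ᵀ * S')).PosSemidef :=
  sage_fd_shrink_step_general S U V σ hU hV hSVD δ hδ S' hS'
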